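/- Let R be a TRS over a signature Σ and (A,[[·]]) a partial Σ-algebra. Then the set NF_A(R) consists exactly of those a ∈ core(A) such that every ground term t with [[t]] = a is a normal form with respect to R. -/

import Mathlib

namespace LocalTerm

/-- Terms over a signature `F` with arities `ar` and variables `X`. -/
inductive Tm (F : Type) (ar : F → ℕ) (X : Type) : Type
  | var : X → Tm F ar X
  | app : (f : F) → (Fin (ar f) → Tm F ar X) → Tm F ar X

/-- Substitution. -/
def subst {F : Type} {ar : F → ℕ} {X Y : Type} (σ : X → Tm F ar Y) :
    Tm F ar X → Tm F ar Y
  | .var x => σ x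
  | .app f ts => .app f fun i => subst σ (ts i)

/-- One-step rewrite relation of a set `R` of rules (over variables `X`),
acting on terms over variables `V`: a rule instance inside a one-hole context. -/
inductive Rw {F : Type} {ar : F → ℕ} {X V : Type}
    (R : Set (Tm F ar X × Tm F ar X)) : Tm F ar V → Tm F ar V → Prop
  | rule {l r : Tm F ar X} (h : (l, r) ∈ R) (σ : X → Tm F ar V) :
      Rw R (subst σ l) (subst σ r)
  | ctxt {f : F} {ts : Fin (ar f) → Tm F ar V} (i : Fin (ar f)) {t' : Tm F ar V} :
      Rw R (ts i) t' → Rw R (Tm.app f ts) (Tm.app f (Function.update ts i t'))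

/-- The set of variables of a term. -/
def Vars {F : Type} {ar : F → ℕ} {X : Type} : Tm F ar X → Set X
  | .var x => {x}
  | .app _ ts => ⋃ i, Vars (ts i)

/-- `R` is a TRS: no left-hand side is a variable,
and all variables of a right-hand side occur in the left-hand side. -/
def IsTRS {F : Type} {ar : F → ℕ} {X : Type}
    (R : Set (Tm F ar X × Tm F ar X)) : Prop :=
  ∀ p ∈ R, (∀ x : X, p.1 ≠ Tm.var x) ∧ Vars p.2 ⊆ Vars p.1

/-- A partial interpretation of the function symbols in a set `A`:
for every `n`-ary symbol a partial function `Aⁿ ⇀ A`. -/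
abbrev Interp (F : Type) (ar : F → ℕ) (A : Type) : Type :=
  ∀ f : F, (Fin (ar f) → A) → Option A

/-- `Eval I α t a` : the (partial) interpretation of `t` under assignment `α`
is defined and equal to `a`. -/
inductive Eval {F : Type} {ar : F → ℕ} {X A : Type}
    (I : Interp F ar A) (α : X → A) : Tm F ar X → A → Prop
  | var (x : X) : Eval I α (Tm.var x) (α x)
  | app {f : F} {ts : Fin (ar f) → Tm F ar X} (as : Fin (ar f) → A) {a : A}
      (hts : ∀ i, Eval I α (ts i) (as i)) (hI : I f as = some a) :
      Eval I α (Tm.app f ts) a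

/-- A set `T` of ground terms is defined if the interpretation of
every `t ∈ T` is defined. -/
def DefinedOn {F : Type} {ar : F → ℕ} {A : Type}
    (I : Interp F ar A) (T : Set (Tm F ar Empty)) : Prop :=
  ∀ t ∈ T, ∃ a : A, Eval I Empty.elim t a

/-- `succ` is a partial model for `R`: whenever the interpretation of a
left-hand side is defined, the right-hand side is defined as well and the
interpretations are related by `succ`. -/
def PartialModel {F : Type} {ar : F → ℕ} {X A : Type}
    (I : Interp F ar A) (succ : A → A → Prop)
    (R : Set (Tm F ar X × Tm F ar X)) : Prop :=
  ∀ p ∈ R, ∀ (α : X → A) (a : A), Eval I α p.1 a →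
    ∃ b : A, Eval I α p.2 b ∧ succ a b

/-- A partial function is closed w.r.t. a relation. -/
def ClosedFn {A : Type} {n : ℕ} (g : (Fin n → A) → Option A)
    (r : A → A → Prop) : Prop :=
  ∀ (v : Fin n → A) (i : Fin n) (b : A), r (v i) b → (g v).isSome →
    (g (Function.update v i b)).isSome

/-- A partial function is monotone w.r.t. a relation. -/
def MonoFn {A : Type} {n : ℕ} (g : (Fin n → A) → Option A)
    (r : A → A → Prop) : Prop :=
  ∀ (v : Fin n → A) (i : Fin n) (b : A) (x y : A), r (v i) b →
    g v = some x → g (Function.update v i b) = some y → r x y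

/-- `(A, I, r)` is a monotone partial algebra: every interpretation is
closed and monotone with respect to `r`. -/
def MonoAlg {F : Type} {ar : F → ℕ} {A : Type}
    (I : Interp F ar A) (r : A → A → Prop) : Prop :=
  ∀ f : F, ClosedFn (I f) r ∧ MonoFn (I f) r

/-- Well-foundedness: no infinite descending sequence. -/
def WFrel {A : Type} (r : A → A → Prop) : Prop :=
  ¬ ∃ f : ℕ → A, ∀ n : ℕ, r (f n) (f (n + 1))

/-- `r` is terminating on `T`: no element of `T` starts an infinite `r`-sequence. -/
def SNon {B : Type} (r : B → B → Prop) (T : Set B) : Prop :=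
  ∀ t ∈ T, ¬ ∃ f : ℕ → B, f 0 = t ∧ ∀ n : ℕ, r (f n) (f (n + 1))

/-- Relative termination on `T`: no element of `T` starts an infinite
`(r ∪ s)`-sequence containing infinitely many `r`-steps. -/
def SNrelOn {B : Type} (r s : B → B → Prop) (T : Set B) : Prop :=
  ∀ t ∈ T, ¬ ∃ f : ℕ → B, f 0 = t ∧
    (∀ n : ℕ, r (f n) (f (n + 1)) ∨ s (f n) (f (n + 1))) ∧
    (∀ m : ℕ, ∃ n : ℕ, m ≤ n ∧ r (f n) (f (n + 1)))

/-- Relative termination (on everything). -/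
def SNrel {B : Type} (r s : B → B → Prop) : Prop := SNrelOn r s Set.univ


/-- The labelled signature: symbols `f` together with a tuple of labels `λ`
such that `I f λ` is defined. -/
def FlabT {F : Type} {ar : F → ℕ} {A : Type} (I : Interp F ar A) : Type :=
  {p : Σ f : F, Fin (ar f) → A // (I p.1 p.2).isSome}

/-- Arity of labelled symbols. -/
def arLab {F : Type} {ar : F → ℕ} {A : Type} (I : Interp F ar A) :
    FlabT I → ℕ :=
  fun p => ar p.1.1

/-- `Lab I α t t'` : `t'` is the labelling of `t` with respect to the
assignment `α` (defined whenever the interpretation of `t` is defined): each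
symbol gets labelled by the tuple of the values of its arguments. -/
inductive Lab {F : Type} {ar : F → ℕ} {X A : Type}
    (I : Interp F ar A) (α : X → A) :
    Tm F ar X → Tm (FlabT I) (arLab I) X → Prop
  | var (x : X) : Lab I α (Tm.var x) (Tm.var x)
  | app {f : F} {ts : Fin (ar f) → Tm F ar X} (as : Fin (ar f) → A)
      (h : (I f as).isSome) (ts' : Fin (ar f) → Tm (FlabT I) (arLab I) X)
      (hev : ∀ i, Eval I α (ts i) (as i))
      (hlab : ∀ i, Lab I α (ts i) (ts' i)) :
      Lab I α (Tm.app f ts) (Tm.app ⟨⟨f, as⟩, h⟩ ts')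

/-- The labelled TRS `lab_A(R)`: all labellings of rules of `R` under
assignments for which the left-hand side is defined. -/
def labTRS {F : Type} {ar : F → ℕ} {X A : Type}
    (I : Interp F ar A) (R : Set (Tm F ar X × Tm F ar X)) :
    Set (Tm (FlabT I) (arLab I) X × Tm (FlabT I) (arLab I) X) :=
  {q | ∃ p ∈ R, ∃ α : X → A, (∃ a : A, Eval I α p.1 a) ∧
        Lab I α p.1 q.1 ∧ Lab I α p.2 q.2}

/-- The core of a partial algebra: the smallest subset closed under all
defined applications of the interpretations. -/
inductive InCore {F : Type} {ar : F → ℕ} {A : Type}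
    (I : Interp F ar A) : A → Prop
  | mk {f : F} (as : Fin (ar f) → A) {a : A} :
      (∀ i, InCore I (as i)) → I f as = some a → InCore I a

/-- The complement (within the core) of the set of normal forms `NF_A(R)`:
the smallest set containing the interpretations of left-hand sides (under
core-valued assignments) and closed under defined applications of the
interpretations with core arguments. -/
inductive NotNF {F : Type} {ar : F → ℕ} {X A : Type}
    (I : Interp F ar A) (R : Set (Tm F ar X × Tm F ar X)) : A → Prop
  | lhs {p : Tm F ar X × Tm F ar X} (hp : p ∈ R) (α : X → A)
      (hα : ∀ x : X, InCore I (α x)) {a : A} (h : Eval I α p.1 a) :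
      NotNF I R a
  | up {f : F} (as : Fin (ar f) → A) (i : Fin (ar f)) {a : A} :
      (∀ j, InCore I (as j)) → NotNF I R (as i) → I f as = some a →
      NotNF I R a

/-- The normal forms `NF_A(R)` of the partial algebra: the largest subset of
the core avoiding interpretations of left-hand sides and closed accordingly. -/
def NFset {F : Type} {ar : F → ℕ} {X A : Type}
    (I : Interp F ar A) (R : Set (Tm F ar X × Tm F ar X)) : Set A :=
  {a : A | InCore I a ∧ ¬ NotNF I R a}

/-- Subterm relation. -/
inductive Subt {F : Type} {ar : F → ℕ} {X : Type} :
    Tm F ar X → Tm F ar X → Prop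
  | refl (t : Tm F ar X) : Subt t t
  | app {s : Tm F ar X} {f : F} {ts : Fin (ar f) → Tm F ar X} (i : Fin (ar f)) :
      Subt s (ts i) → Subt s (Tm.app f ts)

/-- A ground term is an `R`-normal form: it contains no instance of a
left-hand side of `R` as a subterm. -/
def IsNormalForm {F : Type} {ar : F → ℕ} {X : Type}
    (R : Set (Tm F ar X × Tm F ar X)) (t : Tm F ar Empty) : Prop :=
  ¬ ∃ p ∈ R, ∃ σ : X → Tm F ar Empty, Subt (subst σ p.1) t

/-- Weak normalisation of a ground term: it reduces to a normal form. -/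
def WN {F : Type} {ar : F → ℕ} {X : Type}
    (R : Set (Tm F ar X × Tm F ar X)) (t : Tm F ar Empty) : Prop :=
  ∃ u : Tm F ar Empty, Relation.ReflTransGen (Rw R) t u ∧ IsNormalForm R u

/-- Strong normalisation of a ground term: no infinite rewrite sequence. -/
def SN {F : Type} {ar : F → ℕ} {X : Type}
    (R : Set (Tm F ar X × Tm F ar X)) (t : Tm F ar Empty) : Prop :=
  ¬ ∃ f : ℕ → Tm F ar Empty, f 0 = t ∧ ∀ n : ℕ, Rw R (f n) (f (n + 1))

/-- Number of variable occurrences of a term over a single variable. -/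
def countVar {F : Type} {ar : F → ℕ} : Tm F ar Unit → ℕ
  | .var _ => 1
  | .app _ ts => ∑ i, countVar (ts i)

/-- A ground one-hole context: a term over one variable (the hole) with
exactly one occurrence of it. -/
def OneHole {F : Type} {ar : F → ℕ} (C : Tm F ar Unit) : Prop :=
  countVar C = 1

/-- Plugging a ground term into a context. -/
def plug {F : Type} {ar : F → ℕ} (C : Tm F ar Unit) (t : Tm F ar Empty) :
    Tm F ar Empty :=
  subst (fun _ => t) C

/-- The Nerode congruence of a set `N` of ground terms. -/
def Nerode {F : Type} {ar : F → ℕ} (N : Set (Tm F ar Empty))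
    (t1 t2 : Tm F ar Empty) : Prop :=
  ∀ C : Tm F ar Unit, OneHole C → (plug C t1 ∈ N ↔ plug C t2 ∈ N)

/-! A core element is not a normal form exactly when it is the value of a ground term with a
redex: the rule clause of `NotNF` matches a redex at the root (core-valued assignments and
defined ground substitutions correspond, since the core is the set of values of ground terms),
and the closure clause matches a redex below the root. -/

variable {F X A : Type} {ar : F → ℕ} {I : Interp F ar A}

theorem Eval.unique {α : X → A} {t : Tm F ar X} {a b : A}
    (ha : Eval I α t a) (hb : Eval I α t b) : a = b := by
  induction ha generalizing b with
  | var x => cases hb; rfl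
  | app as _ hI ih =>
    cases hb with
    | app bs hts' hI' =>
      obtain rfl : as = bs := funext fun i => ih i (hts' i)
      exact Option.some.inj (hI.symm.trans hI')

theorem Eval.inCore {t : Tm F ar Empty} {a : A} (h : Eval I Empty.elim t a) : InCore I a := by
  induction h with
  | var x => exact x.elim
  | app as _ hI ih => exact InCore.mk as ih hI

theorem InCore.exists_eval {a : A} (h : InCore I a) :
    ∃ t : Tm F ar Empty, Eval I Empty.elim t a := by
  induction h with
  | mk as _ hI ih =>
    choose ts hts using ih
    exact ⟨Tm.app _ ts, Eval.app as hts hI⟩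

theorem Subt.exists_eval {s t : Tm F ar Empty} (hst : Subt s t) {a : A}
    (h : Eval I Empty.elim t a) : ∃ b, Eval I Empty.elim s b := by
  induction hst generalizing a with
  | refl => exact ⟨a, h⟩
  | app i _ ih =>
    cases h with
    | app as hts _ => exact ih (hts i)

theorem Eval.ground_subst {α : X → A} {σ : X → Tm F ar Empty}
    (hσ : ∀ x, Eval I Empty.elim (σ x) (α x)) {t : Tm F ar X} {a : A} (h : Eval I α t a) :
    Eval I Empty.elim (subst σ t) a := by
  induction h with
  | var x => exact hσ x
  | app as _ hI ih => exact Eval.app as ih hI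

theorem Eval.of_ground_subst {α : X → A} {σ : X → Tm F ar Empty}
    (hα : ∀ x c, Eval I Empty.elim (σ x) c → α x = c) {t : Tm F ar X} {a : A}
    (h : Eval I Empty.elim (subst σ t) a) : Eval I α t a := by
  induction t generalizing a with
  | var x => exact hα x a h ▸ Eval.var x
  | app f ts ih =>
    cases h with
    | app as hts hI => exact Eval.app as (fun i => ih i (hts i)) hI

open Classical in
/-- `d` is the value of the variables on which `σ` is undefined; none of them occurs in `t`. -/
theorem Eval.exists_core_assignment_of_ground_subst {σ : X → Tm F ar Empty} {d : A}
    (hd : InCore I d) {t : Tm F ar X} {a : A} (h : Eval I Empty.elim (subst σ t) a) :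
    ∃ α : X → A, (∀ x, InCore I (α x)) ∧ Eval I α t a := by
  let α : X → A := fun x => if hx : ∃ c, Eval I Empty.elim (σ x) c then hx.choose else d
  refine ⟨α, fun x => ?_, Eval.of_ground_subst (fun x c hc => ?_) h⟩
  · by_cases hx : ∃ c, Eval I Empty.elim (σ x) c
    · simpa only [α, dif_pos hx] using hx.choose_spec.inCore
    · simpa only [α, dif_neg hx] using hd
  · have hx : ∃ c, Eval I Empty.elim (σ x) c := ⟨c, hc⟩
    simpa only [α, dif_pos hx] using hx.choose_spec.unique hc

variable {R : Set (Tm F ar X × Tm F ar X)}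

theorem NotNF.of_subt {s t : Tm F ar Empty} (hst : Subt s t) {a b : A}
    (ht : Eval I Empty.elim t a) (hs : Eval I Empty.elim s b) (hb : NotNF I R b) :
    NotNF I R a := by
  induction hst generalizing a with
  | refl => rwa [ht.unique hs]
  | app i _ ih =>
    cases ht with
    | app as hts hI => exact NotNF.up as i (fun j => (hts j).inCore) (ih (hts i)) hI

theorem NotNF.of_eval_of_not_isNormalForm {t : Tm F ar Empty} {a : A}
    (ht : Eval I Empty.elim t a) (hnf : ¬ IsNormalForm R t) : NotNF I R a := by
  obtain ⟨p, hp, σ, hsub⟩ := not_not.mp hnf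
  obtain ⟨b, hb⟩ := hsub.exists_eval ht
  obtain ⟨α, hα, hlhs⟩ := Eval.exists_core_assignment_of_ground_subst hb.inCore hb
  exact NotNF.of_subt hsub ht hb (NotNF.lhs hp α hα hlhs)

theorem NotNF.exists_eval_not_isNormalForm {a : A} (h : NotNF I R a) :
    ∃ t : Tm F ar Empty, Eval I Empty.elim t a ∧ ¬ IsNormalForm R t := by
  induction h with
  | lhs hp α hα h =>
    choose σ hσ using fun x => (hα x).exists_eval
    exact ⟨subst σ _, h.ground_subst hσ, fun hnf => hnf ⟨_, hp, σ, Subt.refl _⟩⟩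
  | @up f as i _ hcore _ hI ih =>
    obtain ⟨s, hs, hsnf⟩ := ih
    choose ts hts using fun j => (hcore j).exists_eval
    refine ⟨Tm.app f (Function.update ts i s), Eval.app as ?_ hI, ?_⟩
    · exact Function.forall_update_iff _ (p := fun j u => Eval I Empty.elim u (as j)) |>.mpr
        ⟨hs, fun j _ => hts j⟩
    · refine fun hnf => hsnf fun ⟨p, hp, σ, hsub⟩ => hnf ⟨p, hp, σ, Subt.app i ?_⟩
      rwa [Function.update_self]

theorem notNF_iff_exists_eval_not_isNormalForm {a : A} :
    NotNF I R a ↔ ∃ t : Tm F ar Empty, Eval I Empty.elim t a ∧ ¬ IsNormalForm R t :=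
  ⟨NotNF.exists_eval_not_isNormalForm, fun ⟨_, ht, hnf⟩ => NotNF.of_eval_of_not_isNormalForm ht hnf⟩

theorem NFset_eq_core_elements_of_normal_forms_general
    {F X A : Type} {ar : F → ℕ}
    (R : Set (Tm F ar X × Tm F ar X))
    (I : Interp F ar A) :
    ∀ a : A, a ∈ NFset I R ↔
      (InCore I a ∧ ∀ t : Tm F ar Empty, Eval I Empty.elim t a →
        IsNormalForm R t) := by
  intro a
  simp only [NFset, Set.mem_ofPred_eq, notNF_iff_exists_eval_not_isNormalForm]
  push Not
  rfl

/-- `NF_A(R)` consists exactly of those core elements `a`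
such that every ground term evaluating to `a` is an `R`-normal form. -/
theorem NFset_eq_core_elements_of_normal_forms
    {F X A : Type} {ar : F → ℕ}
    (R : Set (Tm F ar X × Tm F ar X)) (hR : IsTRS R)
    (I : Interp F ar A) :
    ∀ a : A, a ∈ NFset I R ↔
      (InCore I a ∧ ∀ t : Tm F ar Empty, Eval I Empty.elim t a →
        IsNormalForm R t) :=
  NFset_eq_core_elements_of_normal_forms_general R I

end LocalTerm
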